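/- Let λ > 0 and Q_t > Q_h > 0 be real numbers, and define w(Γ) = exp(−Γ·(Q_t − Q_h)/λ)·(Γ·Q_t + λ)/(Γ·Q_h + λ) for Γ ≥ 0. Then w(Γ) ≤ 1 for every Γ ≥ 0, with equality if and only if Γ = 0; that is, as fixed gas costs drop to zero, the low-fee pool captures the full liquidity market share. -/

import Mathlib

/-!
Put `x = Γ (Q_t - Q_h) / λ`. Then `Γ Q_t + λ = (Γ Q_h + λ) (1 + c x)` with `c = λ / (Γ Q_h + λ) ≤ 1`,
so `w(Γ) = e^{-x} (1 + c x) ≤ e^{-x} (1 + x)`, which is `< 1` as soon as `x > 0`, i.e. `Γ > 0`.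
-/

open Real

lemma one_add_mul_lt_exp {c x : ℝ} (hc : c ≤ 1) (hx : 0 < x) : 1 + c * x < exp x :=
  calc 1 + c * x ≤ x + 1 := by nlinarith
    _ < exp x := add_one_lt_exp hx.ne'

lemma market_share_lt_one {lam Qt Qh Γ : ℝ} (hlam : 0 < lam) (hQh : 0 < Qh) (hQ : Qh < Qt)
    (hΓ : 0 < Γ) :
    exp (-Γ * (Qt - Qh) / lam) * (Γ * Qt + lam) / (Γ * Qh + lam) < 1 := by
  set D := Γ * Qh + lam
  set x := Γ * (Qt - Qh) / lam
  have hD : 0 < D := by positivity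
  have hx : 0 < x := div_pos (mul_pos hΓ (sub_pos.2 hQ)) hlam
  have hc : lam / D ≤ 1 := (div_le_one hD).2 (by simp only [D]; nlinarith)
  have hnum : Γ * Qt + lam = D * (1 + lam / D * x) := by
    simp only [D, x]; field_simp; ring
  have hneg : -Γ * (Qt - Qh) / lam = -x := by simp only [x]; ring
  rw [div_lt_one hD, hneg, exp_neg, hnum, inv_mul_lt_iff₀ (exp_pos x), mul_comm (exp x)]
  exact mul_lt_mul_of_pos_left (one_add_mul_lt_exp hc hx) hD

theorem low_fee_market_share_le_one
    (lam Qt Qh : ℝ) (hlam : 0 < lam) (hQh : 0 < Qh) (hQ : Qh < Qt) :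
    ∀ Γ : ℝ, 0 ≤ Γ →
      Real.exp (-Γ * (Qt - Qh) / lam) * (Γ * Qt + lam) / (Γ * Qh + lam) ≤ 1 ∧
      (Real.exp (-Γ * (Qt - Qh) / lam) * (Γ * Qt + lam) / (Γ * Qh + lam) = 1 ↔ Γ = 0) := by
  intro Γ hΓ
  rcases hΓ.eq_or_lt with rfl | hΓ
  · simp [hlam.ne']
  · have hlt := market_share_lt_one hlam hQh hQ hΓ
    exact ⟨hlt.le, fun h => absurd h hlt.ne, fun h => absurd h hΓ.ne'⟩
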